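/- Let (X,T) be a topological dynamical system with h_top(T) = log K, and assume there exists a continuous injective equivariant map ψ : X → {1,…,K}^ℤ. Then ψ is surjective, hence a topological conjugacy between (X,T) and the K-full shift. -/

import Mathlib

open MeasureTheory Filter Topology Set
open scoped ENNReal NNReal Classical

noncomputable section

namespace Krieger

/-- The shift map `σ` on bi-infinite sequences: `(σ x) i = x (i+1)`. -/
def shift {Λ : Type*} (x : ℤ → Λ) : ℤ → Λ := fun i => x (i + 1)

/-- `Per_n(X,T)` : the set of periodic points of least period `n`. -/
def leastPer {X : Type*} (T : X → X) (n : ℕ) : Set X :=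
  {x | Function.minimalPeriod T x = n}

/-- The set `M(X,T)` of `T`-invariant Borel probability measures. -/
def invProb {X : Type*} [MeasurableSpace X] (T : X → X) : Set (ProbabilityMeasure X) :=
  {μ | ∀ s : Set X, MeasurableSet s → μ.toMeasure (T ⁻¹' s) = μ.toMeasure s}

/-- Pushforward of a probability measure under a map (junk value if not a.e. measurable). -/
def pushPM {X Y : Type*} [MeasurableSpace X] [MeasurableSpace Y] (ψ : X → Y)
    (μ : ProbabilityMeasure X) : ProbabilityMeasure Y :=
  if h : AEMeasurable ψ μ.toMeasure then ⟨μ.toMeasure.map ψ, Measure.isProbabilityMeasure_map h⟩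
  else ⟨Measure.dirac (ψ μ.nonempty.some), inferInstance⟩

/-- The induced map `ψ* : M(X,T) → M(Y)` on invariant probability measures, viewed as a
map into the ambient space of probability measures on `Y`. -/
def inducedMap {X Y : Type*} [MeasurableSpace X] [MeasurableSpace Y] (T : X → X) (ψ : X → Y) :
    ↥(invProb T) → ProbabilityMeasure Y :=
  fun μ => pushPM ψ (μ : ProbabilityMeasure X)

/-- A finite open cover of the whole space. -/
def IsOpenCover {X : Type*} [TopologicalSpace X] (U : Finset (Set X)) : Prop :=
  (∀ A ∈ U, IsOpen A) ∧ ⋃₀ (U : Set (Set X)) = univ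

/-- The join `U ∨ V` of two finite families of sets. -/
def joinC {X : Type*} (U V : Finset (Set X)) : Finset (Set X) :=
  (U ×ˢ V).image fun p => p.1 ∩ p.2

/-- The dynamical join `U^n = ⋁_{i=0}^{n-1} T^{-i} U`. -/
def dynCover {X : Type*} (T : X → X) (U : Finset (Set X)) : ℕ → Finset (Set X)
  | 0 => {univ}
  | n + 1 => joinC (dynCover T U n) (U.image fun A => T^[n] ⁻¹' A)

/-- Minimal cardinality of a subfamily of `V` covering the set `W`. -/
def coverCard {X : Type*} (V : Finset (Set X)) (W : Set X) : ℕ :=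
  sInf {m | ∃ F : Finset (Set X), F ⊆ V ∧ W ⊆ ⋃₀ (F : Set (Set X)) ∧ F.card = m}

/-- The topological conditional entropy `h(V|U)` of the cover `V` given the cover `U`. -/
def condEnt {X : Type*} (T : X → X) (V U : Finset (Set X)) : ℝ :=
  limsup (fun n : ℕ =>
    (⨆ W ∈ dynCover T U n, Real.log (coverCard (dynCover T V n) W)) / n) atTop

/-- `per(T|U)` : exponential growth rate of periodic orbits seen at the scale of `U`. -/
def perEnt {X : Type*} (T : X → X) (U : Finset (Set X)) : ℝ :=
  limsup (fun n : ℕ =>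
    (⨆ W ∈ dynCover T U n, Real.log (Nat.card ↥(leastPer T n ∩ W))) / n) atTop

/-- Asymptotic h-expansiveness: `inf_U sup_V h(V|U) = 0`. -/
def AsympHExpansive {X : Type*} [TopologicalSpace X] (T : X → X) : Prop :=
  ∀ ε > (0:ℝ), ∃ U : Finset (Set X), IsOpenCover U ∧
    ∀ V : Finset (Set X), IsOpenCover V → condEnt T V U < ε

/-- Asymptotic per-expansiveness: `inf_U per(T|U) = 0`. -/
def AsympPerExpansive {X : Type*} [TopologicalSpace X] (T : X → X) : Prop :=
  ∀ ε > (0:ℝ), ∃ U : Finset (Set X), IsOpenCover U ∧ perEnt T U < ε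

/-- Asymptotic expansiveness: both asymptotic h- and per-expansiveness. -/
def AsympExpansive {X : Type*} [TopologicalSpace X] (T : X → X) : Prop :=
  AsympHExpansive T ∧ AsympPerExpansive T

/-- A finite measurable partition of the space. -/
def IsMeasPartition {X : Type*} [MeasurableSpace X] (P : Finset (Set X)) : Prop :=
  (∀ A ∈ P, MeasurableSet A) ∧ ⋃₀ (P : Set (Set X)) = univ ∧
    ∀ A ∈ P, ∀ B ∈ P, A ≠ B → A ∩ B = ∅

/-- A finite clopen partition of the space. -/
def IsClopenPartition {X : Type*} [TopologicalSpace X] (P : Finset (Set X)) : Prop :=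
  (∀ A ∈ P, IsClopen A) ∧ ⋃₀ (P : Set (Set X)) = univ ∧
    ∀ A ∈ P, ∀ B ∈ P, A ≠ B → A ∩ B = ∅

/-- Shannon entropy `H_μ(P)` of a finite family of sets. -/
def entH {X : Type*} [MeasurableSpace X] (μ : Measure X) (P : Finset (Set X)) : ℝ :=
  ∑ A ∈ P, Real.negMulLog (μ A).toReal

/-- Dynamical entropy `h_μ(T,P) = lim_n (1/n) H_μ(⋁_{i<n} T^{-i}P)` of a partition. -/
def entPart {X : Type*} [MeasurableSpace X] (T : X → X) (μ : Measure X)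
    (P : Finset (Set X)) : ℝ :=
  limsup (fun n : ℕ => entH μ (dynCover T P n) / n) atTop

/-- Kolmogorov–Sinai entropy `h_μ(T)`. -/
def ksEntropy {X : Type*} [MeasurableSpace X] (T : X → X) (μ : Measure X) : ℝ :=
  ⨆ P : {P : Finset (Set X) // IsMeasPartition P}, entPart T μ P.1

/-- A set is null when it is negligible for every invariant ergodic probability measure. -/
def IsNullSet {X : Type*} [MeasurableSpace X] (T : X → X) (A : Set X) : Prop :=
  ∀ μ : Measure X, IsProbabilityMeasure μ → Ergodic T μ → μ A = 0

/-- A set is full when it has full measure for every invariant ergodic probability measure. -/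
def IsFullSet {X : Type*} [MeasurableSpace X] (T : X → X) (A : Set X) : Prop :=
  ∀ μ : Measure X, IsProbabilityMeasure μ → Ergodic T μ → μ A = 1

/-- The small boundary property : finite partitions with small boundaries and arbitrarily
small diameters. -/
def SBP {X : Type*} [MetricSpace X] [MeasurableSpace X] (T : X → X) : Prop :=
  ∀ ε > (0:ℝ), ∃ P : Finset (Set X),
    (⋃₀ (P : Set (Set X)) = univ) ∧
    (∀ A ∈ P, ∀ B ∈ P, A ≠ B → A ∩ B = ∅) ∧
    (∀ A ∈ P, IsNullSet T (frontier A)) ∧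
    (∀ A ∈ P, Metric.diam A < ε)

/-- A Borel map into a zero-dimensional space is essentially continuous when preimages of a
basis of clopen sets have small boundaries. -/
def EssCont {X Y : Type*} [TopologicalSpace X] [MeasurableSpace X] [TopologicalSpace Y]
    (T : X → X) (ψ : X → Y) : Prop :=
  ∃ B : Set (Set Y), TopologicalSpace.IsTopologicalBasis B ∧ (∀ s ∈ B, IsClopen s) ∧
    ∀ s ∈ B, IsNullSet T (frontier (ψ ⁻¹' s))

/-- An `ε`-injective map between metric spaces. -/
def EpsInjective {X Y : Type*} [MetricSpace X] [MetricSpace Y] (φ : X → Y) (ε : ℝ) : Prop :=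
  ∃ δ > (0:ℝ), ∀ Z : Set Y, Metric.diam Z < δ → Metric.diam (φ ⁻¹' Z) < ε

/-- The Cantor metric on the shift space : `d(x,y) = 2^{-min{ i ≥ 0 : x_i ≠ y_i or x_{-i} ≠ y_{-i}}}`. -/
def cantorDist {Λ : Type*} (x y : ℤ → Λ) : ℝ :=
  if x = y then 0
  else (2:ℝ)⁻¹ ^ sInf {n : ℕ | x (n:ℤ) ≠ y (n:ℤ) ∨ x (-(n:ℤ)) ≠ y (-(n:ℤ))}

/-- Diameter of a subset of the shift space for the Cantor metric. -/
def cDiam {Λ : Type*} (Z : Set (ℤ → Λ)) : ℝ :=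
  ⨆ p : Z × Z, cantorDist (p.1 : ℤ → Λ) (p.2 : ℤ → Λ)

/-- An `ε`-injective map into the shift space (with its Cantor metric). -/
def EpsInjShift {X Λ : Type*} [MetricSpace X] (φ : X → (ℤ → Λ)) (ε : ℝ) : Prop :=
  ∃ δ > (0:ℝ), ∀ Z : Set (ℤ → Λ), cDiam Z < δ → Metric.diam (φ ⁻¹' Z) < ε

/-- The pseudometric `d_N` on the shift space. -/
def dN {Λ : Type*} (N : ℕ) (x y : ℤ → Λ) : ℝ :=
  ⨆ n : {m : ℕ // N ≤ m},
    (Nat.card ↥{i : ℤ | i.natAbs ≤ (n:ℕ) ∧ x i ≠ y i} : ℝ) / (2 * (n:ℕ) + 1)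

/-- The Besicovitch pseudometric `d_∞ = lim_N d_N` on the shift space. -/
def dB {Λ : Type*} (x y : ℤ → Λ) : ℝ := ⨅ N : ℕ, dN N x y

/-- Cylinder sets on the coordinates `0, …, N-1`. -/
def cylinders (Λ : Type*) : Set (Set (ℤ → Λ)) :=
  {C | ∃ (N : ℕ) (w : ℕ → Λ), C = {y : ℤ → Λ | ∀ i : ℕ, i < N → y (i:ℤ) = w i}}

/-- An enumeration of the cylinder sets. -/
def IsCylEnum {Λ : Type*} (A : ℕ → Set (ℤ → Λ)) : Prop :=
  (∀ n, A n ∈ cylinders Λ) ∧ ∀ C ∈ cylinders Λ, ∃ n, A n = C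

/-- The metric `d_*` on probability measures associated to an enumeration of cylinders. -/
def dStar {Λ : Type*} [MeasurableSpace Λ] (A : ℕ → Set (ℤ → Λ))
    (μ ν : ProbabilityMeasure (ℤ → Λ)) : ℝ :=
  ∑' n : ℕ, |((μ (A n) : ℝ≥0) : ℝ) - ((ν (A n) : ℝ≥0) : ℝ)| / 2 ^ n

/-- The Hausdorff distance `d_H` associated to `d_*`. -/
def dHaus {Λ : Type*} [MeasurableSpace Λ] (A : ℕ → Set (ℤ → Λ))
    (S₁ S₂ : Set (ProbabilityMeasure (ℤ → Λ))) : ℝ :=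
  max (⨆ μ ∈ S₁, ⨅ ν ∈ S₂, dStar A μ ν) (⨆ ν ∈ S₂, ⨅ μ ∈ S₁, dStar A μ ν)

/-- The `n`-th empirical measure `(1/n) ∑_{k<n} δ_{T^k x}` (at time `n+1` so that it is
a probability measure). -/
def empMeas {X : Type*} [MeasurableSpace X] (T : X → X) (x : X) (n : ℕ) : Measure X :=
  (((n:ℝ≥0∞))⁻¹) • ∑ k ∈ Finset.range n, Measure.dirac (T^[k] x)

lemma empMeas_isProb {X : Type*} [MeasurableSpace X] (T : X → X) (x : X) (n : ℕ)
    (hn : n ≠ 0) : IsProbabilityMeasure (empMeas T x n) := by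
  constructor
  simp only [empMeas, Measure.smul_apply, Measure.coe_finset_sum, Finset.sum_apply,
    Measure.dirac_apply' _ MeasurableSet.univ, smul_eq_mul]
  simp only [Set.indicator_univ, Pi.one_apply, Finset.sum_const, Finset.card_range,
    nsmul_eq_mul, mul_one]
  exact ENNReal.inv_mul_cancel (by exact_mod_cast hn) (by simp)

/-- The empirical measures as probability measures. -/
def empPM {X : Type*} [MeasurableSpace X] (T : X → X) (x : X) (n : ℕ) :
    ProbabilityMeasure X :=
  ⟨empMeas T x (n + 1), empMeas_isProb T x (n + 1) (Nat.succ_ne_zero n)⟩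

/-- `φ(x)` : the set of accumulation points of the sequence of empirical measures at `x`. -/
def empCluster {X : Type*} [MeasurableSpace X] [TopologicalSpace X] [OpensMeasurableSpace X]
    (T : X → X) (x : X) : Set (ProbabilityMeasure X) :=
  {μ | MapClusterPt μ atTop (fun n : ℕ => empPM T x n)}

/-- A topological extension : a continuous surjective equivariant map. -/
def IsTopExtension {Y X : Type*} [TopologicalSpace Y] [TopologicalSpace X]
    (π : Y → X) (S : Y → Y) (T : X → X) : Prop :=
  Continuous π ∧ Function.Surjective π ∧ ∀ y, π (S y) = T (π y)

/-- A principal extension : entropies of invariant measures are preserved. -/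
def IsPrincipalExt {Y X : Type*} [MeasurableSpace Y] [MeasurableSpace X]
    (π : Y → X) (S : Y → Y) (T : X → X) : Prop :=
  ∀ ν : Measure Y, IsProbabilityMeasure ν →
    (∀ s : Set Y, MeasurableSet s → ν (S ⁻¹' s) = ν s) →
    ksEntropy S ν = ksEntropy T (ν.map π)

/-- A faithful extension : the induced map on invariant measures is a homeomorphism
onto `M(X,T)`. -/
def IsFaithfulExt {Y X : Type*} [MeasurableSpace Y] [MeasurableSpace X]
    [TopologicalSpace Y] [TopologicalSpace X] [OpensMeasurableSpace Y] [OpensMeasurableSpace X]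
    (π : Y → X) (S : Y → Y) (T : X → X) : Prop :=
  IsEmbedding (inducedMap S π) ∧ range (inducedMap S π) = invProb T

/-- A strongly faithful extension : faithful, and periodic points of least period `n`
are mapped onto each other. -/
def IsStronglyFaithfulExt {Y X : Type*} [MeasurableSpace Y] [MeasurableSpace X]
    [TopologicalSpace Y] [TopologicalSpace X] [OpensMeasurableSpace Y] [OpensMeasurableSpace X]
    (π : Y → X) (S : Y → Y) (T : X → X) : Prop :=
  IsFaithfulExt π S T ∧ ∀ n : ℕ, 1 ≤ n → π '' leastPer S n = leastPer T n

/-- Zero-dimensionality : a basis of clopen sets. -/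
def ZeroDim (X : Type*) [TopologicalSpace X] : Prop :=
  ∃ B : Set (Set X), TopologicalSpace.IsTopologicalBasis B ∧ ∀ s ∈ B, IsClopen s

end Krieger

open Krieger

/-!
If `ψ` missed a point `y`, then, since `range ψ` is closed and invariant under the shift and its
inverse, some word `w` of length `ℓ > 0` occurs nowhere in any `ψ x`. Cutting a window of length
`k ℓ` into blocks of length `ℓ`, each of which must differ from `w`, the windows seen in
`range ψ` number at most `(K ^ ℓ - 1) ^ k` up to boundary effects, so the shift on `range ψ` has
entropy at most `log (K ^ ℓ - 1) / ℓ < log K`. But `ψ` conjugates `T` to the shift on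
`range ψ`, and a conjugacy of compact systems preserves entropy.
-/

open Dynamics Function Uniformity
open scoped SetRel

lemma ENNReal.log_natCast_le (n : ℕ) : ENNReal.log n ≤ (Real.log n : EReal) := by
  rcases n.eq_zero_or_pos with rfl | hn
  · simp
  · rw [ENNReal.log_pos_real (by exact_mod_cast hn.ne') (ENNReal.natCast_ne_top n),
      ENNReal.toReal_natCast]

lemma Real.log_pow_sub_one_div_lt_log {K : ℕ} (hK : 2 ≤ K) {ℓ : ℕ} (hℓ : 0 < ℓ) :
    Real.log (K ^ ℓ - 1 : ℕ) / ℓ < Real.log K := by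
  have hKℓ : 2 ≤ K ^ ℓ := hK.trans (Nat.le_self_pow hℓ.ne' K)
  rw [div_lt_iff₀ (by exact_mod_cast hℓ), mul_comm, ← Real.log_pow, ← Nat.cast_pow]
  exact Real.log_lt_log (by exact_mod_cast (by omega : 0 < K ^ ℓ - 1))
    (by exact_mod_cast (by omega : K ^ ℓ - 1 < K ^ ℓ))

namespace Dynamics

variable {X : Type*}

lemma exists_isDynCoverOf_card_le_of_mapsTo {β : Type*} {T : X → X} {F : Set X}
    {U : SetRel X X} {n : ℕ} (e : X → β) {t : Finset β} (hFt : MapsTo e F t)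
    (he : ∀ x y, e x = e y → (x, y) ∈ dynEntourage T U n) :
    ∃ s : Finset X, IsDynCoverOf T F U n s ∧ s.card ≤ t.card := by
  classical
  rcases F.eq_empty_or_nonempty with rfl | ⟨x₀, -⟩
  · exact ⟨∅, isDynCoverOf_empty, by simp⟩
  have : Nonempty X := ⟨x₀⟩
  refine ⟨t.image (invFunOn e F), fun x hx => ⟨invFunOn e F (e x), ?_, ?_⟩, Finset.card_image_le⟩
  · exact Finset.mem_coe.2 (Finset.mem_image_of_mem _ (hFt hx))
  · exact he _ _ (invFunOn_eq ⟨x, hx, rfl⟩).symm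

theorem coverEntropy_range_eq_of_isEmbedding {Y : Type*} [UniformSpace X] [CompactSpace X]
    [UniformSpace Y] {S : X → X} {T : Y → Y} {φ : X → Y} (h : Semiconj φ S T)
    (hφ : IsEmbedding φ) : coverEntropy T (range φ) = coverEntropy S univ := by
  have hu : ‹UniformSpace X› = .comap φ ‹_› := by
    refine unique_uniformity_of_compact rfl ?_
    rw [UniformSpace.toTopologicalSpace_comap, ← hφ.eq_induced]
  rw [← image_univ, coverEntropy_image_of_comap _ h, ← hu]

end Dynamics

namespace Krieger

variable {Λ : Type*}

lemma shift_iterate_apply (x : ℤ → Λ) (k : ℕ) (i : ℤ) : shift^[k] x i = x (i + k) := by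
  induction k generalizing x with
  | zero => simp
  | succ k ih =>
    rw [iterate_succ_apply, ih]
    simp only [shift, Nat.cast_succ, add_assoc]

lemma translate_mem_of_shift_image_eq {F : Set (ℤ → Λ)} (hF : shift '' F = F) {z : ℤ → Λ}
    (hz : z ∈ F) (m : ℤ) : (fun i => z (i + m)) ∈ F := by
  induction m using Int.induction_on with
  | zero => simpa using hz
  | succ m ih =>
    rw [← hF]
    exact ⟨_, ih, funext fun i => by simp only [shift, add_assoc, add_comm (1 : ℤ)]⟩
  | pred m ih =>
    rw [← hF] at ih
    obtain ⟨z', hz', hshift⟩ := ih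
    convert hz' using 1
    funext i
    have hz'i := congrFun hshift (i - 1)
    simp only [shift, sub_add_cancel] at hz'i
    rw [hz'i]
    ring_nf

def Avoids {ℓ : ℕ} (F : Set (ℤ → Λ)) (w : Fin ℓ → Λ) : Prop :=
  ∀ z ∈ F, ∀ m : ℤ, (fun t : Fin ℓ => z (m + t)) ≠ w

lemma exists_avoids_of_notMem [TopologicalSpace Λ] {F : Set (ℤ → Λ)} (hFc : IsClosed F)
    (hF : shift '' F = F) {y : ℤ → Λ} (hy : y ∉ F) :
    ∃ ℓ > 0, ∃ w : Fin ℓ → Λ, Avoids F w := by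
  obtain ⟨I, u, hu, hIu⟩ := isOpen_pi_iff.1 hFc.isOpen_compl y hy
  set L := I.sup Int.natAbs
  refine ⟨2 * L + 1, by omega, fun t => y (t - L), fun z hz m hzw => ?_⟩
  refine hIu (fun i hi => ?_) (translate_mem_of_shift_image_eq hF hz (m + L))
  have hiL : i.natAbs ≤ L := Finset.le_sup (f := Int.natAbs) hi
  have hzy := congrFun hzw ⟨(i + L).toNat, by omega⟩
  simp only [Int.toNat_of_nonneg (by omega : 0 ≤ i + L), add_sub_cancel_right] at hzy
  simpa [← hzy, add_comm, add_left_comm, add_assoc] using (hu i hi).2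

def cylEntourage (Λ : Type*) (M : ℕ) : SetRel (ℤ → Λ) (ℤ → Λ) :=
  {p | ∀ i : ℤ, i.natAbs ≤ M → p.1 i = p.2 i}

instance (M : ℕ) : (cylEntourage Λ M).IsSymm := ⟨fun _ _ h i hi => (h i hi).symm⟩

lemma cylEntourage_comp_self (M : ℕ) : cylEntourage Λ M ○ cylEntourage Λ M = cylEntourage Λ M :=
  Set.ext fun _ => ⟨fun ⟨_, h₁, h₂⟩ i hi => (h₁ i hi).trans (h₂ i hi),
    fun h => ⟨_, fun _ _ => rfl, h⟩⟩

lemma exists_cylEntourage_subset [UniformSpace Λ] {U : SetRel (ℤ → Λ) (ℤ → Λ)}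
    (hU : U ∈ 𝓤 (ℤ → Λ)) : ∃ M, cylEntourage Λ M ⊆ U := by
  rw [Pi.uniformity, Filter.mem_iInf'] at hU
  obtain ⟨I, hI, V, hV, -, rfl, -⟩ := hU
  refine ⟨hI.toFinset.sup Int.natAbs, fun p hp => mem_iInter₂.2 fun i hi => ?_⟩
  obtain ⟨W, hW, hWV⟩ := Filter.mem_comap.1 (hV i)
  have hpi : p.1 i = p.2 i := hp i (Finset.le_sup (hI.mem_toFinset.2 hi))
  exact hWV (show (p.1 i, p.2 i) ∈ W from hpi ▸ refl_mem_uniformity hW)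

lemma mem_dynEntourage_cylEntourage {x y : ℤ → Λ} {M n : ℕ}
    (h : ∀ i : ℤ, -M ≤ i → i < n + M → x i = y i) :
    (x, y) ∈ dynEntourage shift (cylEntourage Λ M) n :=
  mem_dynEntourage.2 fun k hk i hi => by
    simp only [shift_iterate_apply]
    exact h _ (by omega) (by omega)

lemma eq_of_forall_block_eq {x y : ℤ → Λ} {a : ℤ} {q ℓ : ℕ}
    (h : ∀ (j : Fin q) (t : Fin ℓ), x (a + j * ℓ + t) = y (a + j * ℓ + t))
    {i : ℤ} (ha : a ≤ i) (hq : i < a + q * ℓ) : x i = y i := by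
  obtain ⟨d, rfl⟩ : ∃ d : ℕ, i = a + d := ⟨(i - a).toNat, by omega⟩
  have hd : d < q * ℓ := by exact_mod_cast (by omega : (d : ℤ) < q * ℓ)
  have hℓ : 0 < ℓ := Nat.pos_of_ne_zero (by rintro rfl; simp at hd)
  have hdecomp : d = d / ℓ * ℓ + d % ℓ := (Nat.div_add_mod' d ℓ).symm
  convert h ⟨d / ℓ, Nat.div_lt_of_lt_mul (mul_comm q ℓ ▸ hd)⟩ ⟨d % ℓ, Nat.mod_lt _ hℓ⟩ using 2 <;>
    · rw [add_assoc]; exact_mod_cast congrArg (a + ·) (congrArg Nat.cast hdecomp)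

section Finite

variable [Fintype Λ] {F : Set (ℤ → Λ)} {ℓ : ℕ} {w : Fin ℓ → Λ}

lemma Avoids.exists_isDynCoverOf (hw : Avoids F w) {M n q : ℕ} (hq : n + 2 * M ≤ q * ℓ) :
    ∃ s : Finset (ℤ → Λ), IsDynCoverOf shift F (cylEntourage Λ M) n s ∧
      s.card ≤ (Fintype.card Λ ^ ℓ - 1) ^ q := by
  classical
  obtain ⟨s, hs, hcard⟩ := exists_isDynCoverOf_card_le_of_mapsTo (n := n)
    (fun z (j : Fin q) (t : Fin ℓ) => z (-M + j * ℓ + t))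
    (t := Fintype.piFinset fun _ => Finset.univ.erase w)
    (fun z hz => by simpa using fun j => hw z hz _)
    (fun x y hxy => mem_dynEntourage_cylEntourage fun i h₁ h₂ =>
      eq_of_forall_block_eq (a := -M) (fun j t => congrFun (congrFun hxy j) t) h₁ (by omega))
  refine ⟨s, hs, hcard.trans_eq ?_⟩
  simp [Finset.card_erase_of_mem]

lemma Avoids.coverEntropyEntourage_le (hw : Avoids F w) (hF : MapsTo shift F F) (hℓ : 0 < ℓ)
    (M : ℕ) {k : ℕ} (hk : 0 < k) :
    coverEntropyEntourage shift F (cylEntourage Λ M) ≤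
      (((k + 2 * M) * Real.log (Fintype.card Λ ^ ℓ - 1 : ℕ) / (k * ℓ) : ℝ) : EReal) := by
  set c := Fintype.card Λ ^ ℓ - 1
  obtain ⟨s, hs, hcard⟩ :=
    hw.exists_isDynCoverOf (M := M) (n := k * ℓ) (q := k + 2 * M) (by nlinarith)
  have h := hs.coverEntropyEntourage_le_log_card_div hF (by positivity)
  rw [cylEntourage_comp_self] at h
  have hlog : ENNReal.log s.card ≤ (((k + 2 * M) * Real.log c : ℝ) : EReal) := by
    calc ENNReal.log s.card ≤ ENNReal.log (c ^ (k + 2 * M) : ℕ) :=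
          ENNReal.log_monotone (by exact_mod_cast hcard)
      _ ≤ (Real.log (c ^ (k + 2 * M) : ℕ) : EReal) := ENNReal.log_natCast_le _
      _ = (((k + 2 * M) * Real.log c : ℝ) : EReal) := by push_cast [Real.log_pow]; rfl
  refine h.trans ((EReal.monotone_div_right_of_nonneg (by positivity) hlog).trans_eq ?_)
  rw [EReal.coe_div]
  norm_cast

lemma Avoids.coverEntropy_le [UniformSpace Λ] (hw : Avoids F w) (hF : MapsTo shift F F)
    (hℓ : 0 < ℓ) :
    coverEntropy shift F ≤ ((Real.log (Fintype.card Λ ^ ℓ - 1 : ℕ) / ℓ : ℝ) : EReal) := by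
  set D := Real.log (Fintype.card Λ ^ ℓ - 1 : ℕ)
  refine iSup₂_le fun U hU => ?_
  obtain ⟨M, hM⟩ := exists_cylEntourage_subset hU
  have hlim : Tendsto (fun k : ℕ => (k + 2 * M) * D / (k * ℓ)) atTop (𝓝 (D / ℓ)) := by
    have h := (tendsto_const_div_atTop_nhds_zero_nat (2 * M * D / ℓ)).const_add (D / ℓ)
    rw [add_zero] at h
    refine h.congr' (eventually_atTop.2 ⟨1, fun k hk => ?_⟩)
    have : (k : ℝ) ≠ 0 := by positivity
    field_simp
  exact (coverEntropyEntourage_antitone _ _ hM).trans <| ge_of_tendsto (EReal.tendsto_coe.2 hlim)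
    (eventually_atTop.2 ⟨1, fun k hk => hw.coverEntropyEntourage_le hF hℓ M hk⟩)

end Finite

end Krieger

/-- (Appendix) If `h_top(T) = log K` and `ψ : X → {1,…,K}^ℤ` is a
continuous injective equivariant map, then `ψ` is onto, hence a topological conjugacy with
the `K`-full shift. -/
theorem statement_17 {X : Type*} [MetricSpace X] [CompactSpace X]
    (K : ℕ) (T : X ≃ₜ X)
    (htop : Dynamics.coverEntropy ⇑T Set.univ = (Real.log K : EReal))
    (ψ : X → ℤ → Fin K) (hcont : Continuous ψ) (hinj : Function.Injective ψ)
    (hequiv : ∀ x, ψ (T x) = shift (ψ x)) :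
    Function.Surjective ψ ∧ IsHomeomorph ψ := by
  suffices hsurj : Surjective ψ from
    ⟨hsurj, isHomeomorph_iff_continuous_bijective.2 ⟨hcont, hinj, hsurj⟩⟩
  obtain ⟨x₀⟩ : Nonempty X := by
    by_contra hX
    rw [not_nonempty_iff, ← univ_eq_empty_iff] at hX
    rw [hX, coverEntropy_empty] at htop
    exact EReal.bot_ne_coe _ htop
  rcases lt_or_ge K 2 with hK | hK
  · interval_cases K
    · exact (ψ x₀ 0).elim0
    · exact fun z => ⟨x₀, Subsingleton.elim _ _⟩
  intro y
  by_contra! hy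
  -- `Fin K` has no uniform structure instance; the discrete one induces its topology.
  let _ : UniformSpace (Fin K) := ⊥
  have hψ : IsEmbedding ψ := (hcont.isClosedEmbedding hinj).isEmbedding
  have hshift : shift '' range ψ = range ψ := by
    rw [← range_comp, ← Semiconj.comp_eq hequiv, T.surjective.range_comp]
  obtain ⟨ℓ, hℓ, w, hw⟩ :=
    exists_avoids_of_notMem (isCompact_range hcont).isClosed hshift (y := y) (by simpa using hy)
  have hent := hw.coverEntropy_le (mapsTo_iff_image_subset.2 hshift.le) hℓ
  rw [coverEntropy_range_eq_of_isEmbedding hequiv hψ, htop, Fintype.card_fin,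
    EReal.coe_le_coe_iff] at hent
  exact (Real.log_pow_sub_one_div_lt_log hK hℓ).not_ge hent
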